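/- arXiv:1512.07813 — 2 statements merged into one kernel-verified Lean document; each statement's English description precedes it below -/
import Mathlib

section
/- Let V be a finite-dimensional real inner product space and let α₁, …, αₙ ∈ V be linearly independent. For every λ ∈ V that is dominant with respect to α₁, …, αₙ (i.e. ⟨λ, αᵢ⟩ ≥ 0 for all i), the set of vectors μ ∈ V such that μ is dominant with respect to α₁, …, αₙ and λ − μ = Σᵢ cᵢ αᵢ for some natural numbers c₁, …, cₙ is finite. -/
/-!
A dominant `μ` with `λ - μ = ∑ cᵢ αᵢ`, `cᵢ ≥ 0`, satisfies `⟪μ, λ - μ⟫ ≥ 0`, hence `‖μ‖ ≤ ‖λ‖` and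
`‖∑ cᵢ αᵢ‖ ≤ 2 ‖λ‖`. By linear independence the coefficient map `c ↦ ∑ cᵢ αᵢ` is anti-Lipschitz,
so only finitely many `c ∈ ℕⁿ` are that short.
-/

open RealInnerProductSpace Bornology

theorem norm_le_norm_of_inner_sub_nonneg {V : Type*} [NormedAddCommGroup V]
    [InnerProductSpace ℝ V] {x y : V} (h : 0 ≤ ⟪x, y - x⟫) : ‖x‖ ≤ ‖y‖ := by
  rw [inner_sub_right, real_inner_self_eq_norm_sq] at h
  nlinarith [real_inner_le_norm x y, norm_nonneg x, norm_nonneg y]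

theorem inner_sum_natCast_smul_nonneg {V ι : Type*} [NormedAddCommGroup V]
    [InnerProductSpace ℝ V] [Fintype ι] {α : ι → V} {mu : V} (hmu : ∀ i, 0 ≤ ⟪mu, α i⟫)
    (c : ι → ℕ) : 0 ≤ ⟪mu, ∑ i, (c i : ℝ) • α i⟫ := by
  rw [inner_sum]
  exact Finset.sum_nonneg fun i _ => by
    rw [real_inner_smul_right]
    exact mul_nonneg (Nat.cast_nonneg _) (hmu i)

theorem isometry_pi_natCast {ι : Type*} [Fintype ι] :
    Isometry fun c : ι → ℕ => fun i => (c i : ℝ) :=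
  Isometry.of_dist_eq fun c d => by simp only [dist_pi_def]; rfl

theorem LinearIndependent.finite_setOf_norm_sum_natCast_smul_le {ι E : Type*} [Fintype ι]
    [NormedAddCommGroup E] [NormedSpace ℝ E] {α : ι → E} (hα : LinearIndependent ℝ α) (R : ℝ) :
    {c : ι → ℕ | ‖∑ i, (c i : ℝ) • α i‖ ≤ R}.Finite := by
  obtain ⟨K, -, hK⟩ := (Fintype.linearCombination ℝ α).exists_antilipschitzWith
    (LinearMap.ker_eq_bot.mpr hα.fintypeLinearCombination_injective)
  have hbdd : IsBounded {c : ι → ℕ | ‖∑ i, (c i : ℝ) • α i‖ ≤ R} := by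
    refine ((hK.comp isometry_pi_natCast.antilipschitz).isBounded_preimage
      (Metric.isBounded_closedBall (x := 0) (r := R))).subset fun c hc => ?_
    simpa [Fintype.linearCombination_apply] using hc
  exact hbdd.isCompact_closure.finite_of_discrete.subset subset_closure

theorem finite_dominant_below_general
    {V : Type*} [NormedAddCommGroup V] [InnerProductSpace ℝ V]
    {n : ℕ} (α : Fin n → V) (hα : LinearIndependent ℝ α)
    (lam : V) :
    {mu : V | (∀ i, 0 ≤ ⟪mu, α i⟫) ∧
      ∃ c : Fin n → ℕ, lam - mu = ∑ i, (c i : ℝ) • α i}.Finite := by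
  refine ((hα.finite_setOf_norm_sum_natCast_smul_le (2 * ‖lam‖)).image
    fun c => lam - ∑ i, (c i : ℝ) • α i).subset ?_
  rintro mu ⟨hmu, c, hc⟩
  refine ⟨c, ?_, by simp only [← hc, sub_sub_cancel]⟩
  have hmu_le : ‖mu‖ ≤ ‖lam‖ :=
    norm_le_norm_of_inner_sub_nonneg (hc ▸ inner_sum_natCast_smul_nonneg hmu c)
  calc ‖∑ i, (c i : ℝ) • α i‖ = ‖lam - mu‖ := by rw [hc]
    _ ≤ ‖lam‖ + ‖mu‖ := norm_sub_le _ _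
    _ ≤ 2 * ‖lam‖ := by linarith

/-- For linearly independent `α i` and a dominant vector `lam`, the set of dominant
vectors `mu` with `lam - mu` a nonnegative integral combination of the `α i` is finite. -/
theorem finite_dominant_below
    {V : Type*} [NormedAddCommGroup V] [InnerProductSpace ℝ V] [FiniteDimensional ℝ V]
    {n : ℕ} (α : Fin n → V) (hα : LinearIndependent ℝ α)
    (lam : V) (hlam : ∀ i, 0 ≤ ⟪lam, α i⟫) :
    {mu : V | (∀ i, 0 ≤ ⟪mu, α i⟫) ∧
      ∃ c : Fin n → ℕ, lam - mu = ∑ i, (c i : ℝ) • α i}.Finite :=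
  finite_dominant_below_general α hα lam
end

section
/- Let V be a finite-dimensional real inner product space and let α₁, …, αₙ ∈ V be linearly independent. Define a relation ≺ on the set D = {μ ∈ V : ⟨μ, αᵢ⟩ ≥ 0 for all i} of dominant vectors by: μ ≺ λ if and only if λ − μ is a nonzero combination Σᵢ cᵢ αᵢ with all cᵢ ∈ ℕ. Then the relation ≺ on D is well-founded: there is no infinite strictly descending sequence λ ≻ μ₁ ≻ μ₂ ≻ ⋯ of dominant vectors. -/
/-!
If `λ - μ = ∑ cᵢ αᵢ` with `cᵢ ≥ 0` and `λ, μ` are dominant, then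
`‖λ‖² - ‖μ‖² = ⟪λ - μ, λ + μ⟫ = ∑ cᵢ ⟪αᵢ, λ + μ⟫ ≥ 0`, so norms do not increase along a descending
chain. Linear independence gives `w` with `⟪w, αᵢ⟫ = 1` for all `i`; then `⟪w, ·⟫` drops by at
least `1` at every step (the `cᵢ` are natural numbers, not all zero), while on the ball of radius
`‖λ‖` it is bounded below by `-‖w‖ ‖λ‖`. Hence every descending chain is finite.
-/

open RealInnerProductSpace

section

variable {V : Type*} [NormedAddCommGroup V] [InnerProductSpace ℝ V]

theorem exists_inner_eq_of_linearIndependent {ι : Type*} [Fintype ι] {α : ι → V}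
    (hα : LinearIndependent ℝ α) (f : ι → ℝ) : ∃ w : V, ∀ i, ⟪w, α i⟫ = f i := by
  let W := Submodule.span ℝ (Set.range α)
  let b : Module.Basis ι ℝ W := .span hα
  have : FiniteDimensional ℝ W := .of_basis b
  have := FiniteDimensional.complete ℝ W
  refine ⟨(InnerProductSpace.toDual ℝ W).symm (b.constr ℝ f).toContinuousLinearMap, fun i => ?_⟩
  have hb : ((b i : W) : V) = α i := congrArg Subtype.val (Module.Basis.span_apply hα i)
  rw [← hb, ← Submodule.coe_inner, InnerProductSpace.toDual_symm_apply]
  exact b.constr_basis ℝ f i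

theorem norm_le_norm_of_sub_eq_sum_nonneg_smul {ι : Type*} [Fintype ι] {α : ι → V}
    {c : ι → ℝ} {mu lam : V} (hmu : ∀ i, 0 ≤ ⟪mu, α i⟫) (hlam : ∀ i, 0 ≤ ⟪lam, α i⟫)
    (hc : ∀ i, 0 ≤ c i) (h : lam - mu = ∑ i, c i • α i) : ‖mu‖ ≤ ‖lam‖ := by
  have hsq : ⟪lam - mu, lam + mu⟫ = ‖lam‖ ^ 2 - ‖mu‖ ^ 2 := by
    rw [inner_sub_left, inner_add_right, inner_add_right, real_inner_comm mu lam,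
      real_inner_self_eq_norm_sq, real_inner_self_eq_norm_sq]
    ring
  have hnonneg : 0 ≤ ⟪lam - mu, lam + mu⟫ := by
    rw [h, sum_inner]
    refine Finset.sum_nonneg fun i _ => ?_
    rw [real_inner_smul_left, inner_add_right, real_inner_comm lam, real_inner_comm mu]
    have := hlam i
    have := hmu i
    have := hc i
    positivity
  exact (sq_le_sq₀ (norm_nonneg _) (norm_nonneg _)).1 (by linarith)

theorem one_le_inner_sum_natCast_smul {ι : Type*} [Fintype ι] {α : ι → V} {w : V}
    (hw : ∀ i, ⟪w, α i⟫ = 1) {c : ι → ℕ} (hc : ∑ i, (c i : ℝ) • α i ≠ 0) :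
    1 ≤ ⟪w, ∑ i, (c i : ℝ) • α i⟫ := by
  obtain ⟨i, hi⟩ : ∃ i, c i ≠ 0 := by
    by_contra! h
    simp [h] at hc
  simp only [inner_sum, real_inner_smul_right, hw, mul_one]
  exact_mod_cast (Nat.one_le_iff_ne_zero.2 hi).trans
    (Finset.single_le_sum (fun j _ => Nat.zero_le (c j)) (Finset.mem_univ i))

theorem wellFounded_norm_le_and_inner_add_one_le (w : V) :
    WellFounded (fun mu lam : V => ‖mu‖ ≤ ‖lam‖ ∧ ⟪w, mu⟫ + 1 ≤ ⟪w, lam⟫) := by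
  refine wellFounded_iff_isEmpty_descending_chain.2 ⟨fun ⟨f, hf⟩ => ?_⟩
  have hnorm : ∀ k, ‖f k‖ ≤ ‖f 0‖ := fun k =>
    antitone_nat_of_succ_le (f := fun k => ‖f k‖) (fun k => (hf k).1) (Nat.zero_le k)
  have hinner : ∀ k : ℕ, ⟪w, f k⟫ + k ≤ ⟪w, f 0⟫ := by
    intro k
    induction k with
    | zero => simp
    | succ k ih => push_cast; linarith [(hf k).2]
  obtain ⟨k, hk⟩ := exists_nat_gt (⟪w, f 0⟫ + ‖w‖ * ‖f 0‖)
  have hcs : -(‖w‖ * ‖f k‖) ≤ ⟪w, f k⟫ := neg_le_of_abs_le (abs_real_inner_le_norm w (f k))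
  nlinarith [hinner k, mul_le_mul_of_nonneg_left (hnorm k) (norm_nonneg w)]

end

theorem wellFounded_dominance_order_general
    {V : Type*} [NormedAddCommGroup V] [InnerProductSpace ℝ V]
    {n : ℕ} (α : Fin n → V) (hα : LinearIndependent ℝ α) :
    WellFounded (fun (mu lam : {v : V // ∀ i, 0 ≤ ⟪v, α i⟫}) =>
      ∃ c : Fin n → ℕ, (lam : V) - (mu : V) = ∑ i, (c i : ℝ) • α i ∧
        (lam : V) - (mu : V) ≠ 0) := by
  obtain ⟨w, hw⟩ := exists_inner_eq_of_linearIndependent hα (fun _ => 1)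
  refine Subrelation.wf ?_ (InvImage.wf Subtype.val (wellFounded_norm_le_and_inner_add_one_le w))
  rintro mu lam ⟨c, hc, hne⟩
  refine ⟨norm_le_norm_of_sub_eq_sum_nonneg_smul mu.2 lam.2 (fun i => (c i).cast_nonneg) hc, ?_⟩
  have hstep := one_le_inner_sum_natCast_smul hw (hc ▸ hne)
  rw [← hc, inner_sub_right] at hstep
  linarith

/-- On the set of dominant vectors, the relation "`mu ≺ lam` iff `lam - mu` is a nonzero
nonnegative integral combination of the linearly independent vectors `α i`"
is well-founded. -/
theorem wellFounded_dominance_order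
    {V : Type*} [NormedAddCommGroup V] [InnerProductSpace ℝ V] [FiniteDimensional ℝ V]
    {n : ℕ} (α : Fin n → V) (hα : LinearIndependent ℝ α) :
    WellFounded (fun (mu lam : {v : V // ∀ i, 0 ≤ ⟪v, α i⟫}) =>
      ∃ c : Fin n → ℕ, (lam : V) - (mu : V) = ∑ i, (c i : ℝ) • α i ∧
        (lam : V) - (mu : V) ≠ 0) :=
  wellFounded_dominance_order_general α hα
end
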